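/- arXiv:1307.3062 — 4 statements merged into one kernel-verified Lean document; each statement's English description precedes it below -/
import Mathlib

section
/- For n ≥ 0, T_n^{(r,k)}(x|λ) = Σ_{m=0}^{n} 1/(m+1)^k · Σ_{j=0}^{m} (-1)^j C(m,j) H_n^{(r)}(x-j|λ). -/
open PowerSeries Finset

/-- e^{xt} as a formal power series. -/
noncomputable def expX (x : ℂ) : PowerSeries ℂ := rescale x (exp ℂ)

/-- 1 - e^{-t} as a formal power series. -/
noncomputable def oneSubExpNeg : PowerSeries ℂ := 1 - rescale (-1) (exp ℂ)

/-- Li_k(1-e^{-t}) = Σ_{m≥1} (1-e^{-t})^m / m^k as a formal power series. -/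
noncomputable def polyLogC (k : ℤ) : PowerSeries ℂ :=
  mk fun n => ∑ m ∈ Finset.Icc 1 n, (coeff n (oneSubExpNeg ^ m)) * ((m : ℂ) ^ k)⁻¹

/-- integer power of a power series (inverse via `PowerSeries.inv`). -/
noncomputable def zpowS (f : PowerSeries ℂ) (r : ℤ) : PowerSeries ℂ :=
  f ^ r.toNat * (f⁻¹) ^ (-r).toNat

/-- (1-λ)/(e^t-λ). -/
noncomputable def feBase (l : ℂ) : PowerSeries ℂ :=
  C (1 - l) * (exp ℂ - C l)⁻¹

/-- exponential generating function Σ f(n) t^n/n!. -/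
noncomputable def GF (f : ℕ → ℂ) : PowerSeries ℂ := mk fun n => f n / n.factorial

/-- Stirling numbers of the second kind: (e^t-1)^m = m! Σ_l S2(l,m) t^l/l!. -/
noncomputable def S2 (n m : ℕ) : ℂ :=
  (n.factorial : ℂ) / (m.factorial : ℂ) * coeff n ((exp ℂ - 1) ^ m)

/-
With `O = 1 - e^{-t}`, the series `Li_k(O)` is divisible by `O`: `Li_k(O) = O · Σ_m O^m/(m+1)^k`.
Cancelling `O` in the defining identity of `T` gives
`Σ T_n(x) t^n/n! = Σ_m (m+1)^{-k} · Z(t) e^{xt} O^m` with `Z = ((1-λ)/(e^t-λ))^r`, and the binomial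
expansion `e^{xt} O^m = Σ_j (-1)^j C(m,j) e^{(x-j)t}` turns each summand into a combination of the
generating functions of `H_n(x - j)`. Only finitely many `m` contribute to a given coefficient,
since `O^m` has order `m`.
-/

section PowSeriesSum

variable {R : Type*} [CommRing R]

/-- The series `Σ_m c m • f^m`, which converges `X`-adically when `constantCoeff f = 0`: its
`n`-th coefficient only involves the terms with `m ≤ n`. -/
noncomputable def powSeriesSum (c : ℕ → R) (f : R⟦X⟧) : R⟦X⟧ :=
  mk fun n => coeff n (∑ m ∈ range (n + 1), C (c m) * f ^ m)

theorem coeff_mul_pow_eq_zero_of_lt {f : R⟦X⟧} (hf : constantCoeff f = 0) (g : R⟦X⟧)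
    {m j : ℕ} (h : j < m) : coeff j (g * f ^ m) = 0 :=
  X_pow_dvd_iff.1 ((pow_dvd_pow_of_dvd (X_dvd_iff.2 hf) m).mul_left g) j h

theorem coeff_mul_congr_of_coeff_le {f f' : R⟦X⟧} {n : ℕ}
    (h : ∀ i ≤ n, coeff i f = coeff i f') (g : R⟦X⟧) :
    coeff n (g * f) = coeff n (g * f') := by
  rw [coeff_mul, coeff_mul]
  refine sum_congr rfl fun p hp => ?_
  rw [h p.2 (by rw [HasAntidiagonal.mem_antidiagonal] at hp; omega)]

theorem coeff_powSeriesSum_of_le {c : ℕ → R} {f : R⟦X⟧} (hf : constantCoeff f = 0)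
    {n N : ℕ} (hn : n ≤ N) :
    coeff n (powSeriesSum c f) = coeff n (∑ m ∈ range (N + 1), C (c m) * f ^ m) := by
  rw [powSeriesSum, coeff_mk, map_sum, map_sum]
  refine sum_subset (range_subset_range.2 (by omega)) fun m hmN hmn => ?_
  simp only [mem_range] at hmN hmn
  exact coeff_mul_pow_eq_zero_of_lt hf _ (by omega)

theorem coeff_mul_powSeriesSum {c : ℕ → R} {f : R⟦X⟧} (hf : constantCoeff f = 0)
    (g : R⟦X⟧) (n : ℕ) :
    coeff n (g * powSeriesSum c f) = ∑ m ∈ range (n + 1), c m * coeff n (g * f ^ m) := by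
  rw [coeff_mul_congr_of_coeff_le (fun i hi => coeff_powSeriesSum_of_le hf hi) g, mul_sum,
    map_sum]
  exact sum_congr rfl fun m _ => by rw [mul_left_comm, coeff_C_mul]

end PowSeriesSum

theorem expX_add (a b : ℂ) : expX (a + b) = expX a * expX b :=
  (exp_mul_exp_eq_exp_add a b).symm

theorem expX_pow (a : ℂ) (j : ℕ) : expX a ^ j = expX (j * a) := by
  induction j with
  | zero => simp [expX, rescale_zero]
  | succ j ih => rw [pow_succ, ih, ← expX_add]; push_cast; ring_nf

theorem constantCoeff_oneSubExpNeg : constantCoeff oneSubExpNeg = 0 := by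
  rw [oneSubExpNeg, map_sub, map_one, ← coeff_zero_eq_constantCoeff_apply, coeff_rescale,
    coeff_zero_eq_constantCoeff_apply, constantCoeff_exp]
  simp

theorem oneSubExpNeg_ne_zero : oneSubExpNeg ≠ 0 := by
  intro h
  have h1 : coeff 1 oneSubExpNeg = 1 := by
    simp [oneSubExpNeg, coeff_rescale, coeff_exp, coeff_one]
  simp [h] at h1

theorem oneSubExpNeg_pow (m : ℕ) :
    oneSubExpNeg ^ m = ∑ j ∈ range (m + 1), C ((-1) ^ j * (m.choose j : ℂ)) * expX (-j) := by
  rw [oneSubExpNeg, sub_eq_neg_add, add_pow]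
  refine sum_congr rfl fun j _ => ?_
  have hexp : rescale (-1 : ℂ) (exp ℂ) ^ j = expX (-j) := by
    rw [← expX, expX_pow, mul_neg_one]
  rw [neg_pow, hexp, one_pow, mul_one, map_mul, map_pow, map_neg, map_one, map_natCast]
  ring

theorem expX_mul_oneSubExpNeg_pow (x : ℂ) (m : ℕ) :
    expX x * oneSubExpNeg ^ m =
      ∑ j ∈ range (m + 1), C ((-1) ^ j * (m.choose j : ℂ)) * expX (x - j) := by
  rw [oneSubExpNeg_pow, mul_sum]
  refine sum_congr rfl fun j _ => ?_
  rw [sub_eq_add_neg, expX_add]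
  ring

theorem polyLogC_eq_oneSubExpNeg_mul (k : ℤ) :
    polyLogC k = oneSubExpNeg * powSeriesSum (fun m => (((m : ℂ) + 1) ^ k)⁻¹) oneSubExpNeg := by
  ext n
  have hlast : coeff n (oneSubExpNeg ^ (n + 1)) = 0 := by
    simpa using coeff_mul_pow_eq_zero_of_lt constantCoeff_oneSubExpNeg 1 n.lt_succ_self
  simp only [coeff_mul_powSeriesSum constantCoeff_oneSubExpNeg, ← pow_succ']
  rw [sum_range_succ, hlast, mul_zero, add_zero, polyLogC, coeff_mk,
    ← Ico_add_one_right_eq_Icc, sum_Ico_eq_sum_range]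
  refine sum_congr rfl fun m _ => ?_
  rw [add_comm 1 m]
  push_cast
  ring

theorem coeff_GF (f : ℕ → ℂ) (n : ℕ) : coeff n (GF f) = f n / n.factorial :=
  coeff_mk _ _

theorem stmt3_general (lam : ℂ) (r k : ℤ) (T H : ℕ → ℂ → ℂ)
    (hT : ∀ x : ℂ, oneSubExpNeg * GF (fun n => T n x)
        = zpowS (feBase lam) (r) * polyLogC (k) * expX x)
    (hH : ∀ x : ℂ, GF (fun n => H n x) = zpowS (feBase lam) r * expX x) :
    ∀ (n : ℕ) (x : ℂ),
      T n x = ∑ m ∈ range (n + 1), (((m : ℂ) + 1) ^ k)⁻¹ *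
        ∑ j ∈ range (m + 1), (-1 : ℂ) ^ j * (m.choose j : ℂ) * H n (x - j) := by
  intro n x
  set Z := zpowS (feBase lam) r
  have hGF : GF (fun n => T n x) =
      Z * expX x * powSeriesSum (fun m => (((m : ℂ) + 1) ^ k)⁻¹) oneSubExpNeg := by
    refine mul_left_cancel₀ oneSubExpNeg_ne_zero ?_
    rw [hT, polyLogC_eq_oneSubExpNeg_mul]
    ring
  have hfac : (n.factorial : ℂ) ≠ 0 := Nat.cast_ne_zero.2 n.factorial_ne_zero
  have hcoeff := congrArg (coeff n) hGF
  rw [coeff_GF, coeff_mul_powSeriesSum constantCoeff_oneSubExpNeg, div_eq_iff hfac] at hcoeff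
  have hbinom : ∀ m : ℕ, coeff n (Z * expX x * oneSubExpNeg ^ m) * n.factorial =
      ∑ j ∈ range (m + 1), (-1 : ℂ) ^ j * (m.choose j : ℂ) * H n (x - j) := by
    intro m
    rw [mul_assoc, expX_mul_oneSubExpNeg_pow, mul_sum, map_sum, sum_mul]
    refine sum_congr rfl fun j _ => ?_
    rw [mul_left_comm, coeff_C_mul, ← hH, coeff_GF, mul_assoc, div_mul_cancel₀ _ hfac]
  rw [hcoeff, sum_mul]
  exact sum_congr rfl fun m _ => by rw [mul_assoc, hbinom]

theorem stmt3 (lam : ℂ) (hlam : lam ≠ 1) (r k : ℤ) (T H : ℕ → ℂ → ℂ)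
    (hT : ∀ x : ℂ, oneSubExpNeg * GF (fun n => T n x)
        = zpowS (feBase lam) (r) * polyLogC (k) * expX x)
    (hH : ∀ x : ℂ, GF (fun n => H n x) = zpowS (feBase lam) r * expX x) :
    ∀ (n : ℕ) (x : ℂ),
      T n x = ∑ m ∈ range (n + 1), (((m : ℂ) + 1) ^ k)⁻¹ *
        ∑ j ∈ range (m + 1), (-1 : ℂ) ^ j * (m.choose j : ℂ) * H n (x - j) :=
  stmt3_general lam r k T H hT hH
end

section
/- For n ≥ 0, T_n^{(r,k)}(x|λ) = Σ_{j=0}^{n} [Σ_{m=0}^{n-j} (-1)^{n-m-j}/(m+1)^k · C(n,j) · m! · S₂(n-j,m)] H_j^{(r)}(x|λ), where S₂ denotes Stirling numbers of the second kind. -/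
open PowerSeries Finset

/-!
Since `(1 - e^{-t})^m = (-1)^m (e^{-t} - 1)^m`, the series
`Li_k(1 - e^{-t}) = ∑_{m ≥ 0} (1 - e^{-t})^{m+1} / (m+1)^k` is `1 - e^{-t}` times the exponential
generating function of the poly-Bernoulli numbers `B_p^{(k)} = ∑_m (-1)^{p-m} m! S₂(p,m) / (m+1)^k`.
Cancelling the nonzero factor `1 - e^{-t}` in the domain `ℂ⟦X⟧`, the generating function of
`T^{(r,k)}` is that of `B^{(k)}` times that of `H^{(r)}`, and the formula is the binomial
convolution of their coefficients.
-/
theorem PowerSeries.coeff_pow_eq_zero_of_lt {R : Type*} [Semiring R] {f : PowerSeries R}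
    (hf : constantCoeff f = 0) {m n : ℕ} (h : n < m) : coeff n (f ^ m) = 0 :=
  coeff_of_lt_order n ((Nat.cast_lt.2 h).trans_le (le_order_pow_of_constantCoeff_eq_zero m hf))

theorem GF_injective : Function.Injective GF := by
  intro a b h
  funext n
  have hn := congrArg (coeff n) h
  simp only [GF, coeff_mk] at hn
  exact (div_left_inj' (Nat.cast_ne_zero.2 n.factorial_ne_zero)).1 hn

theorem GF_mul_GF (a b : ℕ → ℂ) :
    GF a * GF b = GF fun n => ∑ j ∈ range (n + 1), (n.choose j : ℂ) * a (n - j) * b j := by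
  ext n
  simp only [GF, coeff_mul, coeff_mk, sum_div]
  rw [← Nat.sum_antidiagonal_swap]
  simp only [Prod.fst_swap, Prod.snd_swap]
  rw [Nat.sum_antidiagonal_eq_sum_range_succ fun j i => a i / i.factorial * (b j / j.factorial)]
  refine sum_congr rfl fun j hj => ?_
  have hjn : j ≤ n := Nat.lt_succ_iff.1 (mem_range.1 hj)
  have hn : (n.factorial : ℂ) ≠ 0 := Nat.cast_ne_zero.2 n.factorial_ne_zero
  rw [Nat.cast_choose ℂ hjn]
  field_simp

theorem coeff_oneSubExpNeg_pow (n m : ℕ) :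
    coeff n (oneSubExpNeg ^ m) = (-1) ^ (n + m) * m.factorial * S2 n m / n.factorial := by
  have h : oneSubExpNeg ^ m = C ((-1) ^ m) * rescale (-1) ((exp ℂ - 1) ^ m) := by
    simp only [oneSubExpNeg, map_pow, map_sub, map_neg, map_one, ← mul_pow]
    ring
  have hn : (n.factorial : ℂ) ≠ 0 := Nat.cast_ne_zero.2 n.factorial_ne_zero
  have hm : (m.factorial : ℂ) ≠ 0 := Nat.cast_ne_zero.2 m.factorial_ne_zero
  rw [h, coeff_C_mul, coeff_rescale, S2, pow_add]
  field_simp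

/-- Kaneko's poly-Bernoulli numbers, through their closed form in Stirling numbers. -/
noncomputable def polyBernoulli (k : ℤ) (p : ℕ) : ℂ :=
  ∑ m ∈ range (p + 1), (-1) ^ (p - m) * (((m : ℂ) + 1) ^ k)⁻¹ * m.factorial * S2 p m

theorem coeff_GF_polyBernoulli (k : ℤ) (n : ℕ) :
    coeff n (GF (polyBernoulli k))
      = ∑ m ∈ range (n + 1), (((m : ℂ) + 1) ^ k)⁻¹ * coeff n (oneSubExpNeg ^ m) := by
  rw [GF, coeff_mk, polyBernoulli, sum_div]
  refine sum_congr rfl fun m hm => ?_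
  have hmn : m ≤ n := Nat.lt_succ_iff.1 (mem_range.1 hm)
  have hsign : (-1 : ℂ) ^ (n - m) = (-1) ^ (n + m) := by
    rw [show n + m = n - m + 2 * m by omega, pow_add, pow_mul, neg_one_sq, one_pow, mul_one]
  rw [coeff_oneSubExpNeg_pow, hsign]
  ring

theorem coeff_GF_polyBernoulli_of_lt (k : ℤ) {n N : ℕ} (h : n < N) :
    coeff n (GF (polyBernoulli k))
      = ∑ m ∈ range N, (((m : ℂ) + 1) ^ k)⁻¹ * coeff n (oneSubExpNeg ^ m) := by
  rw [coeff_GF_polyBernoulli]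
  refine sum_subset (range_subset_range.2 h) fun m _ hm => ?_
  rw [coeff_pow_eq_zero_of_lt constantCoeff_oneSubExpNeg (by simpa using hm), mul_zero]

theorem polyLogC_eq_mul (k : ℤ) : polyLogC k = oneSubExpNeg * GF (polyBernoulli k) := by
  ext n
  have hshift : coeff n (polyLogC k)
      = ∑ m ∈ range (n + 1), (((m : ℂ) + 1) ^ k)⁻¹ * coeff n (oneSubExpNeg ^ (m + 1)) := by
    rw [polyLogC, coeff_mk, show Icc 1 n = Ico 1 (n + 1) from rfl, sum_Ico_eq_sum_range,
      sum_range_succ, coeff_pow_eq_zero_of_lt constantCoeff_oneSubExpNeg (Nat.lt_succ_self n),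
      mul_zero, add_zero, Nat.add_sub_cancel]
    refine sum_congr rfl fun m _ => ?_
    rw [add_comm 1 m]
    push_cast
    ring
  calc coeff n (polyLogC k)
      = ∑ m ∈ range (n + 1), ∑ p ∈ antidiagonal n, (((m : ℂ) + 1) ^ k)⁻¹ *
          (coeff p.1 oneSubExpNeg * coeff p.2 (oneSubExpNeg ^ m)) := by
        simp only [hshift, pow_succ', coeff_mul, mul_sum]
    _ = ∑ p ∈ antidiagonal n, coeff p.1 oneSubExpNeg *
          ∑ m ∈ range (n + 1), (((m : ℂ) + 1) ^ k)⁻¹ * coeff p.2 (oneSubExpNeg ^ m) := by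
        rw [sum_comm]
        simp only [mul_sum, mul_left_comm]
    _ = coeff n (oneSubExpNeg * GF (polyBernoulli k)) := by
        rw [coeff_mul]
        refine sum_congr rfl fun p hp => ?_
        rw [coeff_GF_polyBernoulli_of_lt k (Nat.antidiagonal.snd_lt hp)]

theorem stmt4_general (lam : ℂ) (r k : ℤ) (T H : ℕ → ℂ → ℂ)
    (hT : ∀ x : ℂ, oneSubExpNeg * GF (fun n => T n x)
        = zpowS (feBase lam) (r) * polyLogC (k) * expX x)
    (hH : ∀ x : ℂ, GF (fun n => H n x) = zpowS (feBase lam) r * expX x) :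
    ∀ (n : ℕ) (x : ℂ),
      T n x = ∑ j ∈ range (n + 1),
        (∑ m ∈ range (n - j + 1), (-1 : ℂ) ^ (n - m - j) * (((m : ℂ) + 1) ^ k)⁻¹ *
          (n.choose j : ℂ) * (m.factorial : ℂ) * S2 (n - j) m) * H j x := by
  intro n x
  have hGF : GF (T · x) = GF (polyBernoulli k) * GF (H · x) :=
    mul_left_cancel₀ oneSubExpNeg_ne_zero <| by rw [hT x, polyLogC_eq_mul, hH x]; ring
  rw [GF_mul_GF] at hGF
  rw [congrFun (GF_injective hGF) n]
  refine sum_congr rfl fun j _ => ?_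
  simp only [polyBernoulli, mul_sum, sum_mul, Nat.sub_right_comm n _ j]
  refine sum_congr rfl fun m _ => ?_
  ring

theorem stmt4 (lam : ℂ) (hlam : lam ≠ 1) (r k : ℤ) (T H : ℕ → ℂ → ℂ)
    (hT : ∀ x : ℂ, oneSubExpNeg * GF (fun n => T n x)
        = zpowS (feBase lam) (r) * polyLogC (k) * expX x)
    (hH : ∀ x : ℂ, GF (fun n => H n x) = zpowS (feBase lam) r * expX x) :
    ∀ (n : ℕ) (x : ℂ),
      T n x = ∑ j ∈ range (n + 1),
        (∑ m ∈ range (n - j + 1), (-1 : ℂ) ^ (n - m - j) * (((m : ℂ) + 1) ^ k)⁻¹ *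
          (n.choose j : ℂ) * (m.factorial : ℂ) * S2 (n - j) m) * H j x :=
  stmt4_general lam r k T H hT hH
end

section
/- For n ≥ 0 and s ≥ 0, T_n^{(r,k)}(x|λ) = (1/2^s) Σ_{m=0}^{n} [C(n,m) Σ_{j=0}^{s} C(s,j) T_{n-m}^{(r,k)}(j|λ)] E_m^{(s)}(x), where E_m^{(s)}(x) are Euler polynomials of order s. -/
open PowerSeries Finset

theorem GF_sum {ι : Type*} (s : Finset ι) (f : ι → ℕ → ℂ) :
    GF (fun n => ∑ j ∈ s, f j n) = ∑ j ∈ s, GF (f j) := by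
  ext n
  simp only [GF, coeff_mk, map_sum, sum_div]

theorem GF_const_mul (a : ℂ) (f : ℕ → ℂ) : GF (fun n => a * f n) = C a * GF f := by
  ext n
  simp only [GF, coeff_mk, coeff_C_mul, mul_div_assoc]

theorem GF_mul (f g : ℕ → ℂ) :
    GF f * GF g = GF fun n => ∑ m ∈ range (n + 1), (n.choose m : ℂ) * f m * g (n - m) := by
  ext n
  simp only [GF, coeff_mk, coeff_mul, Nat.sum_antidiagonal_eq_sum_range_succ_mk, sum_div]
  refine sum_congr rfl fun m hm => ?_
  have hmn : m ≤ n := Nat.lt_succ_iff.mp (mem_range.mp hm)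
  have hfact : (n.factorial : ℂ) ≠ 0 := Nat.cast_ne_zero.mpr n.factorial_ne_zero
  rw [Nat.cast_choose ℂ hmn]
  field_simp

theorem expX_natCast (j : ℕ) : expX j = exp ℂ ^ j := by
  rw [expX, exp_pow_eq_rescale_exp]

theorem exp_add_one_pow (s : ℕ) :
    (exp ℂ + 1) ^ s = ∑ j ∈ range (s + 1), C (s.choose j : ℂ) * expX j := by
  rw [add_pow]
  refine sum_congr rfl fun j _ => ?_
  rw [one_pow, mul_one, expX_natCast, map_natCast, mul_comm]

theorem two_pow_mul_eq_sum_choose_mul {a P G : PowerSeries ℂ} {F : ℂ → PowerSeries ℂ}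
    (ha : a ≠ 0) (hF : ∀ y, a * F y = P * expX y) (s : ℕ) (x : ℂ)
    (hG : (exp ℂ + 1) ^ s * G = 2 ^ s * expX x) :
    2 ^ s * F x = (∑ j ∈ range (s + 1), C (s.choose j : ℂ) * F j) * G := by
  have hP : P * (exp ℂ + 1) ^ s = a * ∑ j ∈ range (s + 1), C (s.choose j : ℂ) * F j := by
    rw [exp_add_one_pow, mul_sum, mul_sum]
    exact sum_congr rfl fun j _ => by rw [mul_left_comm a, hF]; ring
  apply mul_left_cancel₀ ha
  calc a * (2 ^ s * F x) = P * (2 ^ s * expX x) := by rw [mul_left_comm, hF]; ring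
    _ = P * (exp ℂ + 1) ^ s * G := by rw [← hG, mul_assoc]
    _ = _ := by rw [hP, mul_assoc]

theorem stmt11_general (lam : ℂ) (r k : ℤ) (s : ℕ) (T E : ℕ → ℂ → ℂ)
    (hT : ∀ x : ℂ, oneSubExpNeg * GF (fun n => T n x)
        = zpowS (feBase lam) (r) * polyLogC (k) * expX x)
    (hE : ∀ x : ℂ, (exp ℂ + 1) ^ s * GF (fun n => E n x) = (2 : PowerSeries ℂ) ^ s * expX x) :
    ∀ (n : ℕ) (x : ℂ),
      T n x = (1 / 2 ^ s) * ∑ m ∈ range (n + 1),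
        ((n.choose m : ℂ) * ∑ j ∈ range (s + 1), (s.choose j : ℂ) * T (n - m) j) * E m x := by
  intro n x
  set c : ℕ → ℂ := fun q => ∑ j ∈ range (s + 1), (s.choose j : ℂ) * T q j
  have hc : GF c = ∑ j ∈ range (s + 1), C (s.choose j : ℂ) * GF (fun q => T q j) := by
    simp only [c, GF_sum, GF_const_mul]
  have hseries : GF (fun q => 2 ^ s * T q x) = GF (fun m => E m x) * GF c := by
    rw [GF_const_mul, map_pow, map_ofNat, mul_comm _ (GF c), hc]
    exact two_pow_mul_eq_sum_choose_mul oneSubExpNeg_ne_zero hT s x (hE x)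
  rw [GF_mul] at hseries
  have hn := congrFun (GF_injective hseries) n
  rw [one_div, eq_inv_mul_iff_mul_eq₀ (pow_ne_zero s two_ne_zero), hn]
  exact sum_congr rfl fun m _ => by ring

theorem stmt11 (lam : ℂ) (hlam : lam ≠ 1) (r k : ℤ) (s : ℕ) (T E : ℕ → ℂ → ℂ)
    (hT : ∀ x : ℂ, oneSubExpNeg * GF (fun n => T n x)
        = zpowS (feBase lam) (r) * polyLogC (k) * expX x)
    (hE : ∀ x : ℂ, (exp ℂ + 1) ^ s * GF (fun n => E n x) = (2 : PowerSeries ℂ) ^ s * expX x) :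
    ∀ (n : ℕ) (x : ℂ),
      T n x = (1 / 2 ^ s) * ∑ m ∈ range (n + 1),
        ((n.choose m : ℂ) * ∑ j ∈ range (s + 1), (s.choose j : ℂ) * T (n - m) j) * E m x :=
  stmt11_general lam r k s T E hT hE
end

section
/- The formal power series (Li_k(1-e^{-t}) - Li_{k-1}(1-e^{-t}))/(1-e^{-t}) has zero constant term, i.e., it is divisible by t as a formal power series, with linear coefficient 1/2^k - 1/2^{k-1}. -/
/-!
Write 1 - e^{-t} = t·u with u(0) = 1. The coefficients of t⁰ and t¹ in Li_k - Li_{k-1} only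
involve the term m = 1, where 1/m^k - 1/m^{k-1} vanishes, so t² divides the difference and the
quotient by t·u vanishes at 0. Its coefficient of t is that of t² in Li_k - Li_{k-1}, to which
only m = 2 contributes, since (1 - e^{-t})^m starts with t^m.
-/

open PowerSeries Finset

namespace PowerSeries

variable {R : Type*} [CommRing R]

theorem eq_X_mul_shift_of_constantCoeff_eq_zero {f : R⟦X⟧} (hf : constantCoeff f = 0) :
    f = X * mk fun p => coeff (p + 1) f := by
  simpa [hf] using eq_X_mul_shift_add_const f

theorem coeff_pow_self_of_constantCoeff_eq_zero {f : R⟦X⟧} (hf : constantCoeff f = 0) (n : ℕ) :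
    coeff n (f ^ n) = coeff 1 f ^ n := by
  conv_lhs => rw [eq_X_mul_shift_of_constantCoeff_eq_zero hf, mul_pow]
  simp [coeff_X_pow_mul']

theorem exists_mul_eq_of_X_sq_dvd {k : Type*} [Field k] {f D : k⟦X⟧}
    (hf : constantCoeff f = 0) (hf₁ : coeff 1 f ≠ 0) (hD : X ^ 2 ∣ D) :
    ∃ g, f * g = D ∧ coeff 0 g = 0 ∧ coeff 1 g = coeff 2 D / coeff 1 f := by
  set u : k⟦X⟧ := mk fun p => coeff (p + 1) f
  have hu : constantCoeff u = coeff 1 f := by simp [u]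
  obtain ⟨h, rfl⟩ := hD
  refine ⟨X * (h * u⁻¹), ?_, by simp, ?_⟩
  · have hinv : u * u⁻¹ = 1 := PowerSeries.mul_inv_cancel u (hu ▸ hf₁)
    rw [eq_X_mul_shift_of_constantCoeff_eq_zero hf]
    linear_combination (X ^ 2 * h) * hinv
  · rw [← zero_add 1, coeff_succ_X_mul, ← zero_add 2, coeff_X_pow_mul]
    simp [hu, div_eq_mul_inv]

end PowerSeries

theorem coeff_one_oneSubExpNeg : coeff 1 oneSubExpNeg = 1 := by
  simp [oneSubExpNeg, coeff_rescale]

theorem coeff_polyLogC_sub (k : ℤ) (n : ℕ) :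
    coeff n (polyLogC k - polyLogC (k - 1)) = ∑ m ∈ Icc 1 n,
      coeff n (oneSubExpNeg ^ m) * (((m : ℂ) ^ k)⁻¹ - ((m : ℂ) ^ (k - 1))⁻¹) := by
  simp only [map_sub, polyLogC, coeff_mk, ← sum_sub_distrib, mul_sub]

theorem X_sq_dvd_polyLogC_sub (k : ℤ) : X ^ 2 ∣ polyLogC k - polyLogC (k - 1) := by
  rw [X_pow_dvd_iff]
  intro n hn
  interval_cases n <;> simp [coeff_polyLogC_sub]

theorem coeff_two_polyLogC_sub (k : ℤ) :
    coeff 2 (polyLogC k - polyLogC (k - 1)) = ((2 : ℂ) ^ k)⁻¹ - ((2 : ℂ) ^ (k - 1))⁻¹ := by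
  rw [coeff_polyLogC_sub, show Icc 1 2 = {1, 2} from rfl,
    sum_pair (by decide), coeff_pow_self_of_constantCoeff_eq_zero constantCoeff_oneSubExpNeg,
    coeff_one_oneSubExpNeg]
  simp

theorem stmt17 (k : ℤ) :
    ∃ g : PowerSeries ℂ,
      oneSubExpNeg * g = polyLogC k - polyLogC (k - 1) ∧
      coeff 0 g = 0 ∧
      coeff 1 g = ((2 : ℂ) ^ k)⁻¹ - ((2 : ℂ) ^ (k - 1))⁻¹ := by
  obtain ⟨g, hg, hg₀, hg₁⟩ := exists_mul_eq_of_X_sq_dvd constantCoeff_oneSubExpNeg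
    (by simp [coeff_one_oneSubExpNeg]) (X_sq_dvd_polyLogC_sub k)
  refine ⟨g, hg, hg₀, ?_⟩
  rw [hg₁, coeff_one_oneSubExpNeg, div_one, coeff_two_polyLogC_sub]
end
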